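/- arXiv:quant-ph/0512029 — 3 statements merged into one kernel-verified Lean document; each statement's English description precedes it below -/
import Mathlib

section
/- Let H be a finite-dimensional complex Hilbert space and n ≥ 1. For every POVM Π = (Π_0,…,Π_n) on H^{⊗(n+1)} that is an unambiguous programmable discriminator for n states in H, there exists a POVM Ξ = (Ξ_0,…,Ξ_n) on H^{⊗(n+1)} that is also an unambiguous programmable discriminator, has efficiency p(Ξ) ≥ p(Π), and is permutation covariant: for every permutation σ ∈ S_n and every i ∈ {1,…,n}, (σ⁻¹_P ⊗ I_D) Ξ_i (σ_P ⊗ I_D) = Ξ_{σ(i)}, where σ_P is the unitary on the first n tensor factors (the program registers) permuting them according to σ and I_D is the identity on the last factor (the data register). -/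
open scoped BigOperators ComplexOrder ComplexInnerProductSpace

noncomputable section

/-- `H`, a model of an `m`-dimensional complex Hilbert space. -/
abbrev Hsp (m : ℕ) : Type := EuclideanSpace ℂ (Fin m)
/-- `H^{⊗n}`, a model of the `n`-fold tensor power of `H`. -/
abbrev Tpow (m n : ℕ) : Type := EuclideanSpace ℂ (Fin n → Fin m)

/-- The product vector `φ₁ ⊗ ⋯ ⊗ φₙ` in `H^{⊗n}`. -/
def prodVec {m n : ℕ} (φ : Fin n → Hsp m) : Tpow m n :=
  WithLp.toLp 2 (fun ω => ∏ i, φ i (ω i))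

/-- The antisymmetric tensor product
`φ₁ ∧ ⋯ ∧ φₙ = (1/√(n!)) Σ_{σ ∈ Sₙ} sgn(σ) φ_{σ(1)} ⊗ ⋯ ⊗ φ_{σ(n)}`. -/
def wedge {m n : ℕ} (φ : Fin n → Hsp m) : Tpow m n :=
  ((Real.sqrt n.factorial : ℂ))⁻¹ •
    ∑ σ : Equiv.Perm (Fin n), ((Equiv.Perm.sign σ : ℤ) : ℂ) • prodVec (fun i => φ (σ i))

/-- The antisymmetric subspace `∧ⁿ H` of `H^{⊗n}`: the span of all antisymmetric
tensor products. -/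
def antisymSub (m n : ℕ) : Submodule ℂ (Tpow m n) :=
  Submodule.span ℂ (Set.range (fun φ : Fin n → Hsp m => wedge φ))

/-- The orthogonal projector `Φ(n)` of `H^{⊗n}` onto the antisymmetric subspace `∧ⁿ H`. -/
def asProj (m n : ℕ) : Tpow m n →L[ℂ] Tpow m n :=
  (antisymSub m n).subtypeL.comp ((antisymSub m n).orthogonalProjection)

/-- Matrix entries of an operator on `EuclideanSpace ℂ ι` w.r.t. the standard
orthonormal basis. -/
def matOf {ι : Type} [Fintype ι] [DecidableEq ι]
    (T : EuclideanSpace ℂ ι →L[ℂ] EuclideanSpace ℂ ι) : Matrix ι ι ℂ :=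
  Matrix.of fun a b => ⟪EuclideanSpace.single a 1, T (EuclideanSpace.single b 1)⟫

/-- The operator on `EuclideanSpace ℂ ι` with the given matrix in the standard basis. -/
def matCLM {ι : Type} [Fintype ι] [DecidableEq ι] (M : Matrix ι ι ℂ) :
    EuclideanSpace ℂ ι →L[ℂ] EuclideanSpace ℂ ι :=
  LinearMap.toContinuousLinearMap (Matrix.toEuclideanLin M)

/-- The total input state `|ψ_j^n⟩ = ψ₁ ⊗ ⋯ ⊗ ψₙ ⊗ ψ_j` in `H^{⊗(n+1)}`:
the `n` program registers hold `ψ₁, …, ψₙ` and the data register holds `ψ_j`. -/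
def inputVec {m n : ℕ} (ψ : Fin n → Hsp m) (j : Fin n) : Tpow m (n+1) :=
  WithLp.toLp 2 (fun ω => (∏ i, ψ i (ω i.castSucc)) * ψ j (ω (Fin.last n)))

/-- Partial trace of an operator on `H^{⊗(n+1)}` over the `p`-th tensor factor,
yielding an operator on the remaining `n` factors kept in their original order. -/
def ptraceAt {m n : ℕ} (p : Fin (n+1)) (T : Tpow m (n+1) →L[ℂ] Tpow m (n+1)) :
    Tpow m n →L[ℂ] Tpow m n :=
  matCLM (Matrix.of fun ω ω' : Fin n → Fin m =>
    ∑ k : Fin m, matOf T (p.insertNth k ω) (p.insertNth k ω'))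

/-- A POVM with outcomes `0, 1, …, n` on `H^{⊗(n+1)}`: positive semidefinite
operators summing to the identity. -/
def IsPOVM {m n : ℕ} (P : Fin (n+1) → (Tpow m (n+1) →L[ℂ] Tpow m (n+1))) : Prop :=
  (∀ i, (P i).IsPositive) ∧ ∑ i, P i = 1

/-- Unambiguous programmable discriminator: `⟨ψ_j^n|Π_i|ψ_j^n⟩ = 0` for all unit
vectors `ψ₁, …, ψₙ` and all `i, j ∈ {1, …, n}` with `j ≠ i` (outcome `i ∈ {1, …, n}`
is indexed by `i.succ : Fin (n+1)`, outcome `0` being the inconclusive one). -/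
def IsUPD {m n : ℕ} (P : Fin (n+1) → (Tpow m (n+1) →L[ℂ] Tpow m (n+1))) : Prop :=
  ∀ ψ : Fin n → Hsp m, (∀ k, ‖ψ k‖ = 1) → ∀ i j : Fin n, j ≠ i →
    ⟪inputVec ψ j, P i.succ (inputVec ψ j)⟫ = 0

/-- Minimax efficiency of a programmable discriminator: the infimum, over all linearly
independent tuples of unit vectors `ψ` and all `i ∈ {1, …, n}`, of the success
probability `⟨ψ_i^n|Π_i|ψ_i^n⟩`. -/
def eff {m n : ℕ} (P : Fin (n+1) → (Tpow m (n+1) →L[ℂ] Tpow m (n+1))) : ℝ :=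
  sInf {x : ℝ | ∃ ψ : Fin n → Hsp m, (∀ k, ‖ψ k‖ = 1) ∧ LinearIndependent ℂ ψ ∧
    ∃ i : Fin n, x = (⟪inputVec ψ i, P i.succ (inputVec ψ i)⟫).re}

/-- The index-permutation underlying `σ_P ⊗ I_D`: slot `j < n` reads slot `σ(j)`,
the last slot (data register) is untouched. -/
def permIdx {m n : ℕ} (σ : Equiv.Perm (Fin n)) (ω : Fin (n+1) → Fin m) :
    Fin (n+1) → Fin m :=
  Fin.lastCases (ω (Fin.last n)) (fun j => ω ((σ j).castSucc))

/-- `σ_P ⊗ I_D`: the unitary on `H^{⊗(n+1)}` sending `φ₁ ⊗ ⋯ ⊗ φₙ ⊗ φ_{n+1}` to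
`φ_{σ(1)} ⊗ ⋯ ⊗ φ_{σ(n)} ⊗ φ_{n+1}` (program registers permuted by `σ`, data
register untouched). -/
def permP {m n : ℕ} (σ : Equiv.Perm (Fin n)) : Tpow m (n+1) →L[ℂ] Tpow m (n+1) :=
  LinearMap.toContinuousLinearMap
    { toFun := fun v => WithLp.toLp 2 (fun ω => v (permIdx σ⁻¹ ω))
      map_add' := fun _ _ => rfl
      map_smul' := fun _ _ => rfl }


/-!
Average `Π` over the symmetric group: `Ξ_k = (1/n!) Σ_σ U_σ⁻¹ Π_{σ·k} U_σ`, where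
`U_σ = σ⁻¹_P ⊗ I_D` is unitary and `σ` acts on the outcomes `1, …, n` while fixing the
inconclusive outcome `0`. Conjugation by unitaries preserves positivity and the resolution of
the identity, so `Ξ` is a POVM, and reindexing the group sum makes it covariant. Since `U_σ`
maps the input state `ψ_j^n` to the input state of the reordered programs `ψ ∘ σ⁻¹` with data
`σ(j)`, each term of `⟨ψ_j^n|Ξ_i|ψ_j^n⟩` is a success probability of `Π` on a legitimate input:
it vanishes for `j ≠ i`, and for `j = i` it is at least `p(Π)`, the reordered tuple being
still linearly independent.
-/

open scoped InnerProduct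

namespace ContinuousLinearMap

section Twirl

variable {G ι 𝕜 E : Type*} [Group G] [Fintype G] [RCLike 𝕜]
  [NormedAddCommGroup E] [InnerProductSpace 𝕜 E]

def twirl (U : G →* E →L[𝕜] E) (ρ : G →* Equiv.Perm ι) (P : ι → E →L[𝕜] E) (k : ι) :
    E →L[𝕜] E :=
  (Fintype.card G : 𝕜)⁻¹ • ∑ g, U g⁻¹ ∘L P (ρ g k) ∘L U g

variable {U : G →* E →L[𝕜] E} {ρ : G →* Equiv.Perm ι}

theorem isPositive_twirl [CompleteSpace E] (hU : ∀ g, (U g)† = U g⁻¹) {P : ι → E →L[𝕜] E}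
    (hP : ∀ k, (P k).IsPositive) (k : ι) : (twirl U ρ P k).IsPositive := by
  refine (isPositive_sum _ fun g _ => ?_).smul_of_nonneg (by positivity)
  simpa only [hU] using (hP (ρ g k)).adjoint_conj (U g)

theorem sum_twirl [Fintype ι] {P : ι → E →L[𝕜] E} (hP : ∑ k, P k = 1) :
    ∑ k, twirl U ρ P k = 1 := by
  have hg : ∀ g : G, ∑ k, U g⁻¹ ∘L P (ρ g k) ∘L U g = 1 := fun g => by
    rw [← comp_finsetSum, ← finsetSum_comp, Equiv.sum_comp (ρ g) P, hP,
      ← mul_def, ← mul_def, one_mul, ← map_mul, inv_mul_cancel, map_one]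
  simp only [twirl, ← Finset.smul_sum]
  rw [Finset.sum_comm, Finset.sum_congr rfl fun g _ => hg g, Finset.sum_const, Finset.card_univ,
    ← Nat.cast_smul_eq_nsmul 𝕜, smul_smul, inv_mul_cancel₀ (by simp), one_smul]

theorem conj_twirl (P : ι → E →L[𝕜] E) (g : G) (k : ι) :
    U g ∘L twirl U ρ P k ∘L U g⁻¹ = twirl U ρ P (ρ g k) := by
  have hmul_inv : ∀ a : G, U a * U a⁻¹ = 1 := fun a => by
    rw [← map_mul, mul_inv_cancel, map_one]
  have hcancel : ∀ (a : G) (X : E →L[𝕜] E), U a * (U a⁻¹ * X) = X := fun a X => by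
    rw [← mul_assoc, hmul_inv, one_mul]
  simp only [twirl, smul_comp, comp_smul, comp_finsetSum, finsetSum_comp]
  rw [← Equiv.sum_comp (Equiv.mulRight g)]
  simp only [Equiv.coe_mulRight, ← mul_def, mul_inv_rev, map_mul, Equiv.Perm.mul_apply,
    mul_assoc, hmul_inv, hcancel, mul_one]

theorem inner_twirl_apply [CompleteSpace E] (hU : ∀ g, (U g)† = U g⁻¹) (P : ι → E →L[𝕜] E)
    (k : ι) (v : E) :
    inner 𝕜 v (twirl U ρ P k v) =
      (Fintype.card G : 𝕜)⁻¹ * ∑ g, inner 𝕜 (U g v) (P (ρ g k) (U g v)) := by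
  simp only [twirl, smul_apply, sum_apply, comp_apply, inner_smul_right, inner_sum, ← hU,
    adjoint_inner_right]

theorem le_re_inner_twirl_apply [CompleteSpace E] (hU : ∀ g, (U g)† = U g⁻¹)
    {P : ι → E →L[𝕜] E} {k : ι} {v : E} {c : ℝ}
    (h : ∀ g, c ≤ RCLike.re (inner 𝕜 (U g v) (P (ρ g k) (U g v)))) :
    c ≤ RCLike.re (inner 𝕜 v (twirl U ρ P k v)) := by
  have hcard : (0 : ℝ) < Fintype.card G := by exact_mod_cast Fintype.card_pos
  rw [inner_twirl_apply hU, ← RCLike.ofReal_natCast, ← RCLike.ofReal_inv, RCLike.re_ofReal_mul,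
    map_sum, le_inv_mul_iff₀ hcard]
  simpa using Finset.card_nsmul_le_sum Finset.univ _ c fun g _ => h g

end Twirl

end ContinuousLinearMap

namespace Equiv.Perm

variable {n : ℕ}

def fixLastHom (n : ℕ) : Perm (Fin n) →* Perm (Fin (n+1)) :=
  extendDomainHom Fin.castSuccEmb.toEquivRange

def fixZeroHom (n : ℕ) : Perm (Fin n) →* Perm (Fin (n+1)) :=
  extendDomainHom (Fin.succEmb n).toEquivRange

@[simp] theorem fixLastHom_castSucc (σ : Perm (Fin n)) (i : Fin n) :
    fixLastHom n σ i.castSucc = (σ i).castSucc :=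
  extendDomain_apply_image σ Fin.castSuccEmb.toEquivRange i

@[simp] theorem fixLastHom_last (σ : Perm (Fin n)) : fixLastHom n σ (Fin.last n) = Fin.last n :=
  extendDomain_apply_not_subtype σ _ (by simp)

@[simp] theorem fixZeroHom_succ (σ : Perm (Fin n)) (i : Fin n) :
    fixZeroHom n σ i.succ = (σ i).succ :=
  extendDomain_apply_image σ (Fin.succEmb n).toEquivRange i

theorem lastCases_comp_eq_comp_fixLastHom {α : Type*} (σ : Perm (Fin n)) (f : Fin (n+1) → α) :
    Fin.lastCases (f (Fin.last n)) (fun j => f (σ j).castSucc) = f ∘ fixLastHom n σ := by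
  funext k
  induction k using Fin.lastCases <;> simp

end Equiv.Perm

open Equiv.Perm

section PermutationOperator

variable {m n : ℕ}

theorem permIdx_eq_comp (σ : Equiv.Perm (Fin n)) (ω : Fin (n+1) → Fin m) :
    permIdx σ ω = ω ∘ fixLastHom n σ :=
  lastCases_comp_eq_comp_fixLastHom σ ω

theorem permP_apply (σ : Equiv.Perm (Fin n)) (v : Tpow m (n+1)) (ω : Fin (n+1) → Fin m) :
    permP σ v ω = v (ω ∘ fixLastHom n σ⁻¹) := by
  rw [← permIdx_eq_comp]; rfl

theorem permP_one : permP (m := m) (1 : Equiv.Perm (Fin n)) = 1 := by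
  ext v ω; simp [permP_apply]

theorem permP_mul (σ τ : Equiv.Perm (Fin n)) :
    permP (m := m) (σ * τ) = permP τ * permP σ := by
  ext v ω; simp [permP_apply, Function.comp_assoc]

theorem inner_permP_permP (σ : Equiv.Perm (Fin n)) (u v : Tpow m (n+1)) :
    ⟪permP σ u, permP σ v⟫ = ⟪u, v⟫ := by
  simp only [PiLp.inner_apply, permP_apply]
  exact (Equiv.arrowCongr (fixLastHom n σ⁻¹).symm (Equiv.refl _)).sum_comp
    fun ω => ⟪u ω, v ω⟫

theorem adjoint_permP (σ : Equiv.Perm (Fin n)) :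
    (permP (m := m) σ)† = permP σ⁻¹ := by
  refine ((ContinuousLinearMap.eq_adjoint_iff _ _).2 fun x y => ?_).symm
  rw [← inner_permP_permP σ, ← mul_apply_eq_comp, ← permP_mul, inv_mul_cancel,
    permP_one, one_apply_eq_self]

theorem permP_prodVec (σ : Equiv.Perm (Fin n)) (φ : Fin (n+1) → Hsp m) :
    permP σ (prodVec φ) =
      prodVec (Fin.lastCases (φ (Fin.last n)) (fun j => φ ((σ j).castSucc))) := by
  ext ω
  rw [permP_apply, lastCases_comp_eq_comp_fixLastHom]
  simp only [prodVec, Function.comp_apply]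
  rw [← Equiv.prod_comp (fixLastHom n σ)]
  simp

theorem inputVec_eq_prodVec (ψ : Fin n → Hsp m) (j : Fin n) :
    inputVec ψ j = prodVec (Fin.snoc ψ (ψ j)) := by
  ext ω; simp [inputVec, prodVec, Fin.prod_univ_castSucc]

theorem permP_inputVec (σ : Equiv.Perm (Fin n)) (ψ : Fin n → Hsp m) (j : Fin n) :
    permP σ (inputVec ψ j) = inputVec (ψ ∘ σ) (σ⁻¹ j) := by
  rw [inputVec_eq_prodVec, permP_prodVec, inputVec_eq_prodVec]
  congr 1
  funext k
  induction k using Fin.lastCases <;> simp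

-- `permP` reverses products (`permP_mul`), hence the inverse.
def permRep (m n : ℕ) : Equiv.Perm (Fin n) →* (Tpow m (n+1) →L[ℂ] Tpow m (n+1)) where
  toFun σ := permP σ⁻¹
  map_one' := by rw [inv_one, permP_one]
  map_mul' σ τ := by rw [mul_inv_rev, permP_mul]

end PermutationOperator

open ContinuousLinearMap

section Discriminator

variable {m n : ℕ}

theorem permRep_apply (σ : Equiv.Perm (Fin n)) : permRep m n σ = permP σ⁻¹ := rfl

theorem adjoint_permRep (σ : Equiv.Perm (Fin n)) : (permRep m n σ)† = permRep m n σ⁻¹ := by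
  rw [permRep_apply, permRep_apply, adjoint_permP]

theorem permRep_inputVec (σ : Equiv.Perm (Fin n)) (ψ : Fin n → Hsp m) (j : Fin n) :
    permRep m n σ (inputVec ψ j) = inputVec (ψ ∘ ⇑σ⁻¹) (σ j) := by
  rw [permRep_apply, permP_inputVec, inv_inv]

def permTwirl (P : Fin (n+1) → (Tpow m (n+1) →L[ℂ] Tpow m (n+1))) :
    Fin (n+1) → (Tpow m (n+1) →L[ℂ] Tpow m (n+1)) :=
  twirl (permRep m n) (fixZeroHom n) P

theorem IsPOVM.permTwirl {P : Fin (n+1) → (Tpow m (n+1) →L[ℂ] Tpow m (n+1))} (hP : IsPOVM P) :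
    IsPOVM (permTwirl P) :=
  ⟨isPositive_twirl adjoint_permRep hP.1, sum_twirl hP.2⟩

theorem IsUPD.permTwirl {P : Fin (n+1) → (Tpow m (n+1) →L[ℂ] Tpow m (n+1))} (hP : IsUPD P) :
    IsUPD (permTwirl P) := by
  intro ψ hψ i j hji
  rw [_root_.permTwirl, inner_twirl_apply adjoint_permRep]
  refine mul_eq_zero_of_right _ (Finset.sum_eq_zero fun σ _ => ?_)
  rw [fixZeroHom_succ, permRep_inputVec]
  exact hP _ (fun k => hψ _) _ _ (σ.injective.ne hji)

theorem permP_comp_permTwirl_comp (P : Fin (n+1) → (Tpow m (n+1) →L[ℂ] Tpow m (n+1)))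
    (σ : Equiv.Perm (Fin n)) (i : Fin n) :
    (permP σ⁻¹).comp ((permTwirl P i.succ).comp (permP σ)) = permTwirl P (σ i).succ := by
  simpa [permTwirl, permRep_apply] using
    conj_twirl (U := permRep m n) (ρ := fixZeroHom n) P σ i.succ

theorem eff_le_re_inner {P : Fin (n+1) → (Tpow m (n+1) →L[ℂ] Tpow m (n+1))}
    (hP : ∀ k, (P k).IsPositive) {ψ : Fin n → Hsp m} (hψ : ∀ k, ‖ψ k‖ = 1)
    (hli : LinearIndependent ℂ ψ) (i : Fin n) :
    eff P ≤ (⟪inputVec ψ i, P i.succ (inputVec ψ i)⟫).re := by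
  refine csInf_le ⟨0, ?_⟩ ⟨ψ, hψ, hli, i, rfl⟩
  rintro x ⟨ψ, -, -, i, rfl⟩
  exact (hP i.succ).re_inner_nonneg_right _

theorem eff_le_eff_of_forall {P Q : Fin (n+1) → (Tpow m (n+1) →L[ℂ] Tpow m (n+1))}
    (h : ∀ ψ : Fin n → Hsp m, (∀ k, ‖ψ k‖ = 1) → LinearIndependent ℂ ψ → ∀ i : Fin n,
      eff P ≤ (⟪inputVec ψ i, Q i.succ (inputVec ψ i)⟫).re) :
    eff P ≤ eff Q := by
  by_cases hex : ∃ ψ : Fin n → Hsp m, (∀ k, ‖ψ k‖ = 1) ∧ LinearIndependent ℂ ψ ∧ Nonempty (Fin n)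
  · obtain ⟨ψ, hψ, hli, ⟨i⟩⟩ := hex
    refine le_csInf ⟨_, ψ, hψ, hli, i, rfl⟩ ?_
    rintro x ⟨ψ, hψ, hli, i, rfl⟩
    exact h ψ hψ hli i
  -- No admissible `(ψ, i)` (e.g. `m < n`): both infima are `sInf ∅ = 0`.
  · have hempty : ∀ R : Fin (n+1) → (Tpow m (n+1) →L[ℂ] Tpow m (n+1)), eff R = 0 := fun R => by
      refine (congrArg sInf (Set.eq_empty_of_forall_notMem ?_)).trans Real.sInf_empty
      rintro x ⟨ψ, hψ, hli, i, -⟩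
      exact hex ⟨ψ, hψ, hli, ⟨i⟩⟩
    rw [hempty P, hempty Q]

theorem eff_le_eff_permTwirl {P : Fin (n+1) → (Tpow m (n+1) →L[ℂ] Tpow m (n+1))}
    (hP : IsPOVM P) : eff P ≤ eff (permTwirl P) := by
  refine eff_le_eff_of_forall fun ψ hψ hli i => le_re_inner_twirl_apply adjoint_permRep fun σ => ?_
  rw [fixZeroHom_succ, permRep_inputVec]
  exact eff_le_re_inner hP.1 (fun k => hψ _) (hli.comp _ σ⁻¹.injective) _

end Discriminator

theorem exists_permutation_covariant_UPD_of_UPD_general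
    (m n : ℕ)
    (P : Fin (n+1) → (Tpow m (n+1) →L[ℂ] Tpow m (n+1)))
    (hP : IsPOVM P) (hUP : IsUPD P) :
    (∀ (σ : Equiv.Perm (Fin n)) (φ : Fin (n+1) → Hsp m),
        permP σ (prodVec φ) =
          prodVec (Fin.lastCases (φ (Fin.last n)) (fun j => φ ((σ j).castSucc)))) ∧
    ∃ Ξ : Fin (n+1) → (Tpow m (n+1) →L[ℂ] Tpow m (n+1)),
      IsPOVM Ξ ∧ IsUPD Ξ ∧ eff P ≤ eff Ξ ∧
      ∀ (σ : Equiv.Perm (Fin n)) (i : Fin n),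
        (permP σ⁻¹).comp ((Ξ i.succ).comp (permP σ)) = Ξ (σ i).succ :=
  ⟨permP_prodVec, permTwirl P, hP.permTwirl, hUP.permTwirl, eff_le_eff_permTwirl hP,
    permP_comp_permTwirl_comp P⟩

theorem exists_permutation_covariant_UPD_of_UPD
    (m n : ℕ) (hn : 1 ≤ n)
    (P : Fin (n+1) → (Tpow m (n+1) →L[ℂ] Tpow m (n+1)))
    (hP : IsPOVM P) (hUP : IsUPD P) :
    (∀ (σ : Equiv.Perm (Fin n)) (φ : Fin (n+1) → Hsp m),
        permP σ (prodVec φ) =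
          prodVec (Fin.lastCases (φ (Fin.last n)) (fun j => φ ((σ j).castSucc)))) ∧
    ∃ Ξ : Fin (n+1) → (Tpow m (n+1) →L[ℂ] Tpow m (n+1)),
      IsPOVM Ξ ∧ IsUPD Ξ ∧ eff P ≤ eff Ξ ∧
      ∀ (σ : Equiv.Perm (Fin n)) (i : Fin n),
        (permP σ⁻¹).comp ((Ξ i.succ).comp (permP σ)) = Ξ (σ i).succ :=
  exists_permutation_covariant_UPD_of_UPD_general m n P hP hUP
end
end

section
/- Let H_A and H_B be finite-dimensional complex Hilbert spaces, let Ω be a positive semidefinite operator on H_A ⊗ H_B, and let |φ⟩ ∈ H_B be a unit vector. If the support of the partial trace Tr_A(Ω) is contained in the one-dimensional span of |φ⟩, then Ω = (Tr_B Ω) ⊗ |φ⟩⟨φ|. -/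
/-!
Write `Ω = X⋆X` and cut `X` into the column blocks `X_a = X(·, (a, ·))`. Then
`Tr_A Ω = ∑ₐ X_a⋆ X_a`, so a vector `ψ ⊥ φ`, which lies in the kernel of `Tr_A Ω`, is killed by
every `X_a`, hence by every block `Ω_{aa'} = X_a⋆ X_{a'}`. A square matrix which, together with its
adjoint, vanishes on `φ⊥` is `tr(Ω_{aa'}) • |φ⟩⟨φ|`, and `tr(Ω_{aa'})` is the `(a, a')` entry of
`Tr_B Ω`.
-/

open scoped ComplexOrder BigOperators Matrix ComplexInnerProductSpace Kronecker

noncomputable section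

namespace Matrix

section RankOne

variable {R : Type*} [CommRing R] [StarRing R] {m n : Type*} [Fintype n] {φ : n → R}

theorem eq_vecMulVec_mulVec_of_mulVec_eq_zero (hφ : star φ ⬝ᵥ φ = 1) {N : Matrix m n R}
    (hN : ∀ ψ, star φ ⬝ᵥ ψ = 0 → N *ᵥ ψ = 0) : N = vecMulVec (N *ᵥ φ) (star φ) := by
  classical
  ext i j
  have horth : star φ ⬝ᵥ (Pi.single j 1 - star φ j • φ) = 0 := by
    rw [dotProduct_sub, dotProduct_single, dotProduct_smul, hφ, smul_eq_mul, mul_one, sub_self]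
  have hcol := congrFun (hN _ horth) i
  rw [mulVec_sub, mulVec_single_one, mulVec_smul] at hcol
  simpa [vecMulVec_apply, sub_eq_zero, mul_comm] using hcol

theorem eq_trace_smul_vecMulVec_of_mulVec_eq_zero (hφ : star φ ⬝ᵥ φ = 1) {N : Matrix n n R}
    (hN : ∀ ψ, star φ ⬝ᵥ ψ = 0 → N *ᵥ ψ = 0) (hNH : ∀ ψ, star φ ⬝ᵥ ψ = 0 → Nᴴ *ᵥ ψ = 0) :
    N = N.trace • vecMulVec φ (star φ) := by
  have hcol := eq_vecMulVec_mulVec_of_mulVec_eq_zero hφ hN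
  have hrow : N = vecMulVec φ (star (Nᴴ *ᵥ φ)) := by
    simpa using congrArg conjTranspose (eq_vecMulVec_mulVec_of_mulVec_eq_zero hφ hNH)
  obtain ⟨c, hc⟩ : ∃ c : R, N = c • vecMulVec φ (star φ) := by
    refine ⟨star (Nᴴ *ᵥ φ) ⬝ᵥ φ, ?_⟩
    conv_lhs => rw [hcol]
    conv_lhs => rw [hrow, vecMulVec_mulVec, op_smul_eq_smul, smul_vecMulVec]
  have htrace : N.trace = c := by
    rw [hc, trace_smul, trace_vecMulVec, dotProduct_comm, hφ, smul_eq_mul, mul_one]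
  rwa [htrace]

end RankOne

theorem mulVec_eq_zero_of_sum_conjTranspose_mul_self_mulVec_eq_zero {R : Type*} [CommRing R]
    [StarRing R] [PartialOrder R] [StarOrderedRing R] [NoZeroDivisors R]
    {ι m n : Type*} [Fintype ι] [Fintype m] [Fintype n] (Y : ι → Matrix m n R) {ψ : n → R}
    (h : (∑ i, (Y i)ᴴ * Y i) *ᵥ ψ = 0) (i : ι) : Y i *ᵥ ψ = 0 := by
  have hsum : ∑ i, star (Y i *ᵥ ψ) ⬝ᵥ Y i *ᵥ ψ = 0 := by
    simpa [sum_mulVec, dotProduct_sum, ← mulVec_mulVec, dotProduct_mulVec, star_mulVec] using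
      congrArg (star ψ ⬝ᵥ ·) h
  exact dotProduct_star_self_eq_zero.mp <|
    (Finset.sum_eq_zero_iff_of_nonneg fun i _ => dotProduct_star_self_nonneg _).mp hsum i
      (Finset.mem_univ i)

section PartialTrace

variable {R : Type*} [AddCommMonoid R] {A B : Type*}

def partialTraceFst [Fintype A] (Ω : Matrix (A × B) (A × B) R) : Matrix B B R :=
  of fun b b' => ∑ a, Ω (a, b) (a, b')

def partialTraceSnd [Fintype B] (Ω : Matrix (A × B) (A × B) R) : Matrix A A R :=
  of fun a a' => ∑ b, Ω (a, b) (a', b)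

theorem partialTraceFst_eq_sum_submatrix [Fintype A] (Ω : Matrix (A × B) (A × B) R) :
    partialTraceFst Ω = ∑ a, Ω.submatrix (Prod.mk a) (Prod.mk a) := by
  ext b b'
  simp [partialTraceFst, sum_apply]

theorem partialTraceSnd_apply [Fintype B] (Ω : Matrix (A × B) (A × B) R) (a a' : A) :
    partialTraceSnd Ω a a' = (Ω.submatrix (Prod.mk a) (Prod.mk a')).trace :=
  rfl

end PartialTrace

open scoped MatrixOrder in
theorem PosSemidef.submatrix_mulVec_eq_zero_of_partialTraceFst_mulVec_eq_zero {𝕜 : Type*}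
    [RCLike 𝕜] {A B : Type*} [Fintype A] [Fintype B] {Ω : Matrix (A × B) (A × B) 𝕜}
    (hΩ : Ω.PosSemidef) {ψ : B → 𝕜} (hψ : partialTraceFst Ω *ᵥ ψ = 0) (a a' : A) :
    Ω.submatrix (Prod.mk a) (Prod.mk a') *ᵥ ψ = 0 := by
  classical
  obtain ⟨X, rfl⟩ := CStarAlgebra.nonneg_iff_eq_star_mul_self.mp hΩ.nonneg
  have hblock (a a' : A) : (star X * X).submatrix (Prod.mk a) (Prod.mk a') =
      (X.submatrix id (Prod.mk a))ᴴ * X.submatrix id (Prod.mk a') := by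
    ext b b'
    simp [mul_apply, star_eq_conjTranspose]
  simp only [partialTraceFst_eq_sum_submatrix, hblock] at hψ
  rw [hblock, ← mulVec_mulVec,
    mulVec_eq_zero_of_sum_conjTranspose_mul_self_mulVec_eq_zero _ hψ a', mulVec_zero]

theorem mulVec_eq_zero_of_orthogonal_ker_le_span {𝕜 n : Type*} [RCLike 𝕜] [Fintype n]
    [DecidableEq n] {M : Matrix n n 𝕜} {φ : EuclideanSpace 𝕜 n}
    (h : (LinearMap.ker (toEuclideanLin M))ᗮ ≤ Submodule.span 𝕜 {φ}) {ψ : n → 𝕜}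
    (hψ : star (WithLp.ofLp φ) ⬝ᵥ ψ = 0) : M *ᵥ ψ = 0 := by
  have hperp : WithLp.toLp 2 ψ ∈ (Submodule.span 𝕜 {φ})ᗮ := by
    rwa [Submodule.mem_orthogonal_singleton_iff_inner_right,
      EuclideanSpace.inner_eq_star_dotProduct, dotProduct_comm]
  have hker := Submodule.orthogonal_le h hperp
  rw [Submodule.orthogonal_orthogonal, LinearMap.mem_ker] at hker
  exact congrArg WithLp.ofLp hker

end Matrix

theorem EuclideanSpace.star_dotProduct_self {𝕜 n : Type*} [RCLike 𝕜] [Fintype n]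
    (x : EuclideanSpace 𝕜 n) : star (WithLp.ofLp x) ⬝ᵥ WithLp.ofLp x = (‖x‖ : 𝕜) ^ 2 := by
  rw [dotProduct_comm, ← EuclideanSpace.inner_eq_star_dotProduct, inner_self_eq_norm_sq_to_K]

open Matrix

theorem eq_kronecker_of_support_ptraceA_le_span_general
    {A B : Type} [Fintype A] [Fintype B] [DecidableEq B]
    (Ω : Matrix (A × B) (A × B) ℂ) (hΩ : Ω.PosSemidef)
    (φ : EuclideanSpace ℂ B) (hφ : ‖φ‖ = 1)
    (hsupp :
      (LinearMap.ker (Matrix.toEuclideanLin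
          (Matrix.of fun b b' : B => ∑ a : A, Ω (a, b) (a, b'))))ᗮ
        ≤ Submodule.span ℂ {φ}) :
    Ω = (Matrix.of fun a a' : A => ∑ b : B, Ω (a, b) (a', b)) ⊗ₖ
          Matrix.vecMulVec φ (star φ) := by
  change _ = partialTraceSnd Ω ⊗ₖ _
  have hφ' : star (WithLp.ofLp φ) ⬝ᵥ WithLp.ofLp φ = 1 := by
    simp [EuclideanSpace.star_dotProduct_self, hφ]
  have hker (a a' : A) (ψ : B → ℂ) (hψ : star (WithLp.ofLp φ) ⬝ᵥ ψ = 0) :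
      Ω.submatrix (Prod.mk a) (Prod.mk a') *ᵥ ψ = 0 :=
    hΩ.submatrix_mulVec_eq_zero_of_partialTraceFst_mulVec_eq_zero
      (mulVec_eq_zero_of_orthogonal_ker_le_span hsupp hψ) a a'
  have hblock (a a' : A) :
      Ω.submatrix (Prod.mk a) (Prod.mk a') = partialTraceSnd Ω a a' • vecMulVec φ (star φ) := by
    rw [partialTraceSnd_apply]
    refine eq_trace_smul_vecMulVec_of_mulVec_eq_zero hφ' (hker a a') ?_
    rw [conjTranspose_submatrix, hΩ.isHermitian.eq]
    exact hker a' a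
  ext ⟨a, b⟩ ⟨a', b'⟩
  simpa using congrFun₂ (hblock a a') b b'

theorem eq_kronecker_of_support_ptraceA_le_span
    {A B : Type} [Fintype A] [Fintype B] [DecidableEq A] [DecidableEq B]
    (Ω : Matrix (A × B) (A × B) ℂ) (hΩ : Ω.PosSemidef)
    (φ : EuclideanSpace ℂ B) (hφ : ‖φ‖ = 1)
    (hsupp :
      (LinearMap.ker (Matrix.toEuclideanLin
          (Matrix.of fun b b' : B => ∑ a : A, Ω (a, b) (a, b'))))ᗮ
        ≤ Submodule.span ℂ {φ}) :
    Ω = (Matrix.of fun a a' : A => ∑ b : B, Ω (a, b) (a', b)) ⊗ₖ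
          Matrix.vecMulVec φ (star φ) :=
  eq_kronecker_of_support_ptraceA_le_span_general Ω hΩ φ hφ hsupp
end
end

section
/- For n ≥ 1, consider the real symmetric matrix Λ of size n(n+1) × n(n+1), with rows and columns indexed by pairs (i,k) with i ∈ {1,…,n} and k ∈ {1,…,n+1}, and entries Λ_{(i,k),(j,l)} = δ_{i,j}δ_{k,l} + ((−1)^{i−j+k−l}/n)·(1−δ_{k,l})(1−δ_{i,j}). Then the largest eigenvalue of Λ equals n. -/
/-!
With `σ (i, k) = (-1) ^ (i + k)`, the matrix is `Λ = 1 + (1/n) • diag σ * M * diag σ`, where `M` is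
the `0/1` matrix of pairs of indices that differ in both coordinates. Each row of `M` has exactly
`n (n - 1)` ones, so `σ` is an eigenvector of `Λ` with eigenvalue `1 + (n - 1) = n`. Conversely,
each Gershgorin disc of `Λ` has centre `1` and radius `n (n - 1) / n = n - 1`, so no real
eigenvalue exceeds `n`.
-/

open Finset Matrix

namespace Matrix

variable {ι : Type*} [Fintype ι] [DecidableEq ι]

theorem mem_spectrum_of_mulVec_eq_smul {K : Type*} [Field K] {A : Matrix ι ι K} {μ : K}
    {v : ι → K} (hv : v ≠ 0) (h : A *ᵥ v = μ • v) : μ ∈ spectrum K A := by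
  rw [← spectrum_toLin', ← Module.End.hasEigenvalue_iff_mem_spectrum]
  exact Module.End.hasEigenvalue_of_hasEigenvector
    ⟨Module.End.mem_eigenspace_iff.mpr (by rwa [toLin'_apply]), hv⟩

theorem le_of_mem_spectrum_of_row_bound {A : Matrix ι ι ℝ} {μ c : ℝ} (hμ : μ ∈ spectrum ℝ A)
    (hrow : ∀ i, A i i + ∑ j ∈ univ.erase i, |A i j| ≤ c) : μ ≤ c := by
  rw [← spectrum_toLin', ← Module.End.hasEigenvalue_iff_mem_spectrum] at hμ
  obtain ⟨i, hi⟩ := eigenvalue_mem_ball hμ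
  rw [Metric.mem_closedBall, Real.dist_eq] at hi
  simp only [Real.norm_eq_abs] at hi
  linarith [(abs_le.mp hi).2, hrow i]

end Matrix

section OffDiagMask

variable {α β : Type*} [DecidableEq α] [DecidableEq β]

theorem sum_ite_eq_zero_one [Fintype α] (a : α) :
    ∑ b, (if a = b then (0 : ℝ) else 1) = Fintype.card α - 1 := by
  simp [sum_ite, filter_ne, Nat.cast_pred (Fintype.card_pos_iff.mpr ⟨a⟩)]

def offDiagMask (p q : α × β) : ℝ :=
  (if p.1 = q.1 then 0 else 1) * (if p.2 = q.2 then 0 else 1)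

theorem offDiagMask_self (p : α × β) : offDiagMask p p = 0 := by
  simp [offDiagMask]

theorem offDiagMask_nonneg (p q : α × β) : 0 ≤ offDiagMask p q := by
  unfold offDiagMask
  split_ifs <;> norm_num

theorem sum_offDiagMask [Fintype α] [Fintype β] (p : α × β) :
    ∑ q, offDiagMask p q = (Fintype.card α - 1) * (Fintype.card β - 1) := by
  rw [Fintype.sum_prod_type, ← sum_ite_eq_zero_one p.1, ← sum_ite_eq_zero_one p.2,
    Fintype.sum_mul_sum]
  rfl

end OffDiagMask

section CheckerboardSign

variable {m k : ℕ}

def checkerboardSign (p : Fin m × Fin k) : ℝ := (-1) ^ (p.1.val + p.2.val)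

theorem checkerboardSign_mul_self (p : Fin m × Fin k) :
    checkerboardSign p * checkerboardSign p = 1 := by
  simp [checkerboardSign, ← pow_add, ← two_mul]

theorem abs_checkerboardSign (p : Fin m × Fin k) : |checkerboardSign p| = 1 := by
  simp [checkerboardSign]

theorem checkerboardSign_ne_zero (hm : 0 < m) (hk : 0 < k) :
    (checkerboardSign : Fin m × Fin k → ℝ) ≠ 0 :=
  fun h => by simpa [checkerboardSign] using congrFun h (⟨0, hm⟩, ⟨0, hk⟩)

end CheckerboardSign

section LambdaMatrix

noncomputable def lambdaMatrix (n : ℕ) : Matrix (Fin n × Fin (n + 1)) (Fin n × Fin (n + 1)) ℝ :=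
  Matrix.of fun p q : Fin n × Fin (n + 1) =>
    (if p = q then (1 : ℝ) else 0) +
      ((-1 : ℝ) ^ (p.1.val + q.1.val + p.2.val + q.2.val) / n) *
        (if p.2 = q.2 then 0 else 1) * (if p.1 = q.1 then 0 else 1)

variable {n : ℕ}

theorem lambdaMatrix_apply (p q : Fin n × Fin (n + 1)) :
    lambdaMatrix n p q = (if p = q then 1 else 0) +
      checkerboardSign p * checkerboardSign q / n * offDiagMask p q := by
  simp only [lambdaMatrix, Matrix.of_apply, checkerboardSign, offDiagMask, ← pow_add]
  ring_nf

theorem abs_lambdaMatrix_apply (p q : Fin n × Fin (n + 1)) :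
    |lambdaMatrix n p q| = (if p = q then 1 else 0) + offDiagMask p q / n := by
  rw [lambdaMatrix_apply]
  split_ifs with h
  · simp [h, offDiagMask_self]
  · rw [zero_add, abs_mul, abs_div, abs_mul, abs_checkerboardSign, abs_checkerboardSign,
      Nat.abs_cast, abs_of_nonneg (offDiagMask_nonneg p q)]
    ring

theorem lambdaMatrix_mulVec_checkerboardSign (hn : (n : ℝ) ≠ 0) :
    lambdaMatrix n *ᵥ checkerboardSign = (n : ℝ) • checkerboardSign := by
  ext p
  have hterm : ∀ q, lambdaMatrix n p q * checkerboardSign q =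
      (if p = q then checkerboardSign p else 0) + checkerboardSign p / n * offDiagMask p q := by
    intro q
    rw [lambdaMatrix_apply]
    split_ifs with h
    · simp [h, offDiagMask_self]
    · linear_combination checkerboardSign p / n * offDiagMask p q * checkerboardSign_mul_self q
  rw [mulVec, dotProduct]
  simp only [hterm, sum_add_distrib, sum_ite_eq, mem_univ, if_true, ← mul_sum, sum_offDiagMask,
    Fintype.card_fin, Pi.smul_apply, smul_eq_mul]
  push_cast
  field_simp
  ring

theorem lambdaMatrix_diag_add_sum_abs_offDiag (hn : (n : ℝ) ≠ 0) (p : Fin n × Fin (n + 1)) :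
    lambdaMatrix n p p + ∑ q ∈ univ.erase p, |lambdaMatrix n p q| = n := by
  simp_rw [sum_erase_eq_sub (mem_univ p), abs_lambdaMatrix_apply, sum_add_distrib, ← sum_div,
    sum_offDiagMask, lambdaMatrix_apply, offDiagMask_self]
  simp only [sum_ite_eq, mem_univ, if_true, Fintype.card_fin]
  push_cast
  field_simp
  ring

end LambdaMatrix

theorem lambda_matrix_largest_eigenvalue
    (n : ℕ) (hn : 1 ≤ n) :
    IsGreatest
      (spectrum ℝ (Matrix.of fun p q : Fin n × Fin (n + 1) =>
        (if p = q then (1 : ℝ) else 0) +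
          ((-1 : ℝ) ^ (p.1.val + q.1.val + p.2.val + q.2.val) / n) *
            (if p.2 = q.2 then 0 else 1) * (if p.1 = q.1 then 0 else 1)))
      (n : ℝ) := by
  have hn0 : (n : ℝ) ≠ 0 := by positivity
  constructor
  · exact Matrix.mem_spectrum_of_mulVec_eq_smul (checkerboardSign_ne_zero hn n.succ_pos)
      (lambdaMatrix_mulVec_checkerboardSign hn0)
  · exact fun μ hμ => Matrix.le_of_mem_spectrum_of_row_bound hμ fun p =>
      (lambdaMatrix_diag_add_sum_abs_offDiag hn0 p).le
end
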